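/- Let (B,Q), (A,P) ∈ ℰ^N with ∅ ≠ B ⊂ A (proper inclusion) and (A,P) ⊒ (B,Q). Then μ_{ℰ^N}((B,Q),(A,P)) = (−1)^{|Q^A|−1}·(|Q^A|−1)!·μ_{𝒫^{A^c}}(Q^{A^c}, P^{A^c}), where |Q^A| is the number of blocks of the partition of A induced by Q. -/

import Mathlib

open scoped BigOperators

/-- `modp n A` is the modular partition `P^A_⊥` of `Fin n` whose unique (possibly)
non-singleton block is `A`, all other blocks being singletons. -/
def modp (n : ℕ) (A : Set (Fin n)) : Setoid (Fin n) where
  r x y := x = y ∨ (x ∈ A ∧ y ∈ A)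
  iseqv := by
    refine ⟨fun _ => Or.inl rfl, ?_, ?_⟩
    · rintro x y (rfl | ⟨hx, hy⟩)
      · exact Or.inl rfl
      · exact Or.inr ⟨hy, hx⟩
    · rintro x y z (rfl | ⟨hx, hy⟩) h
      · exact h
      · rcases h with rfl | ⟨hy', hz⟩
        · exact Or.inr ⟨hx, hy⟩
        · exact Or.inr ⟨hx, hz⟩

/-- The product `X^N = 2^N × 𝒫^N` of the subset lattice and the partition lattice,
ordered componentwise. -/
abbrev XN (n : ℕ) := Set (Fin n) × Setoid (Fin n)

/-- The closure operator `cl` on `X^N`:  `cl(∅,P) = (∅,P)` and, for `A ≠ ∅`,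
`cl(A,P) = (Ā, P ⊔ P^A_⊥)` where `Ā` is the block of `P ⊔ P^A_⊥` containing `A`. -/
def EmbClosure (n : ℕ) (x : XN n) : XN n :=
  ({y | ∃ a ∈ x.1, (x.2 ⊔ modp n x.1) y a}, x.2 ⊔ modp n x.1)

/-- An embedded subset is a pair that coincides with its closure. -/
def IsEmbedded (n : ℕ) (x : XN n) : Prop := EmbClosure n x = x

/-- The lattice `ℰ^N` of embedded subsets, with the induced order. -/
abbrev Emb (n : ℕ) := {x : XN n // IsEmbedded n x}

lemma modp_le_of_subsingleton {n : ℕ} {A : Set (Fin n)} (h : A.Subsingleton)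
    (Q : Setoid (Fin n)) : modp n A ≤ Q := by
  rw [Setoid.le_def]
  intro x y hxy
  rcases hxy with rfl | ⟨hx, hy⟩
  · exact Q.refl' x
  · obtain rfl := h hx hy
    exact Q.refl' x

lemma modp_eq_bot_of_subsingleton {n : ℕ} {A : Set (Fin n)} (h : A.Subsingleton) :
    modp n A = ⊥ :=
  le_antisymm (modp_le_of_subsingleton h ⊥) bot_le

lemma embedded_empty (n : ℕ) (Q : Setoid (Fin n)) : IsEmbedded n (∅, Q) := by
  unfold IsEmbedded EmbClosure
  refine Prod.ext ?_ ?_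
  · simp
  · simpa using sup_eq_left.mpr (modp_le_of_subsingleton Set.subsingleton_empty Q)

lemma embedded_univ_top (n : ℕ) : IsEmbedded n (Set.univ, ⊤) := by
  unfold IsEmbedded EmbClosure
  refine Prod.ext ?_ ?_
  · ext y
    simp only [Set.mem_setOf_eq, Set.mem_univ, iff_true]
    exact ⟨y, trivial, Setoid.refl' _ y⟩
  · exact sup_eq_left.mpr le_top

lemma embedded_singleton (n : ℕ) (i : Fin n) : IsEmbedded n ({i}, ⊥) := by
  have hb : modp n ({i} : Set (Fin n)) = ⊥ :=
    modp_eq_bot_of_subsingleton Set.subsingleton_singleton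
  unfold IsEmbedded EmbClosure
  refine Prod.ext ?_ ?_
  · ext y
    simp only [Set.mem_setOf_eq, hb, sup_idem, Set.mem_singleton_iff]
    constructor
    · rintro ⟨a, ha, hrel⟩
      subst ha
      first
        | simpa [Setoid.bot_def, hb] using hrel
        | (have h2 : ((⊥ : Setoid (Fin n)) ⊔ modp n {a}) y a := hrel
           rw [hb, sup_idem] at h2
           simpa [Setoid.bot_def] using h2)
    · rintro rfl
      exact ⟨y, rfl, Setoid.refl' _ y⟩
  · simp [hb]

/-- The bottom element `(∅, P_⊥)` of `ℰ^N`. -/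
def botE (n : ℕ) : Emb n := ⟨(∅, ⊥), embedded_empty n ⊥⟩

/-- The top element `(N, P^⊤)` of `ℰ^N`. -/
def topE (n : ℕ) : Emb n := ⟨(Set.univ, ⊤), embedded_univ_top n⟩

/-- The atom `({i}, P_⊥)` of `ℰ^N`. -/
def atomS (n : ℕ) (i : Fin n) : Emb n := ⟨({i}, ⊥), embedded_singleton n i⟩

/-- The atom `(∅, [ij])` of `ℰ^N`, where `[ij]` is the atom of the partition lattice
whose unique non-singleton block is the pair `{i, j}`. -/
def atomP (n : ℕ) (i j : Fin n) : Emb n := ⟨(∅, modp n {i, j}), embedded_empty n _⟩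

/-- A pair is an atom candidate: of the form `({i},P_⊥)` or `(∅,[ij])` with `i ≠ j`. -/
def IsAtomPair (n : ℕ) (a : XN n) : Prop :=
  (∃ i : Fin n, a = ({i}, ⊥)) ∨ ∃ i j : Fin n, i ≠ j ∧ a = (∅, modp n {i, j})

/-- The number of blocks `|P|` of a partition. -/
noncomputable def numBlocks {α : Type*} (P : Setoid α) : ℕ := P.classes.ncard

/-- The rank function `r(A,P) = (n − |P|) + min{|A|,1}` of `ℰ^N`. -/
noncomputable def erank (n : ℕ) (x : XN n) : ℕ := (n - numBlocks x.2) + min x.1.ncard 1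

/-- The partition `Q^S` of `S` induced by a partition `Q` of `N`. -/
def indPart {n : ℕ} (S : Set (Fin n)) (Q : Setoid (Fin n)) : Setoid S :=
  Setoid.comap Subtype.val Q

/-- `mu` is the Möbius function of the (finite) poset `α`. -/
def IsMobius {α : Type*} [PartialOrder α] (mu : α → α → ℤ) : Prop :=
  (∀ x, mu x x = 1) ∧
  (∀ x y, ¬x ≤ y → mu x y = 0) ∧
  (∀ x y, x < y → mu x y = -∑ᶠ z ∈ Set.Ico x y, mu x z)


open scoped Classical

section General
variable {α : Type*} [PartialOrder α] [Finite α]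

noncomputable def mobiusFn (x : α) : α → ℤ :=
  WellFounded.fix (Finite.to_wellFoundedLT (α := α)).wf
    (fun y rec =>
      if x = y then 1
      else if x < y then
        -∑ z ∈ (Set.toFinite (Set.Ico x y)).toFinset.attach,
          rec z.1 (((Set.toFinite (Set.Ico x y)).mem_toFinset.mp z.2).2)
      else 0)

lemma mobiusFn_eq (x y : α) :
    mobiusFn x y = if x = y then 1 else if x < y then
      -∑ z ∈ (Set.toFinite (Set.Ico x y)).toFinset, mobiusFn x z else 0 := by
  rw [mobiusFn, WellFounded.fix_eq]
  by_cases h1 : x = y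
  · rw [if_pos h1, if_pos h1]
  · rw [if_neg h1, if_neg h1]
    by_cases h2 : x < y
    · rw [if_pos h2, if_pos h2]
      show -∑ z ∈ (Set.toFinite (Set.Ico x y)).toFinset.attach, mobiusFn x z.1 = _
      rw [Finset.sum_attach]
      rfl
    · rw [if_neg h2, if_neg h2]

lemma mobiusFn_isMobius : IsMobius (mobiusFn (α := α)) := by
  refine ⟨fun x => by rw [mobiusFn_eq, if_pos rfl], fun x y h => ?_, fun x y h => ?_⟩
  · rw [mobiusFn_eq, if_neg (fun e => h (le_of_eq e)), if_neg (fun e => h (le_of_lt e))]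
  · rw [mobiusFn_eq, if_neg (ne_of_lt h), if_pos h,
      finsum_mem_eq_finite_toFinset_sum _ (Set.toFinite (Set.Ico x y))]

lemma IsMobius.unique {mu mu' : α → α → ℤ} (h : IsMobius mu) (h' : IsMobius mu') : mu = mu' := by
  have key : ∀ y x : α, x ≤ y → mu x y = mu' x y := by
    haveI : WellFoundedLT α := Finite.to_wellFoundedLT
    refine fun y => IsWellFounded.induction
      (motive := fun y => ∀ x ≤ y, mu x y = mu' x y) ((· < ·) : α → α → Prop) y ?_
    intro y IH x hxy
    rcases eq_or_lt_of_le hxy with rfl | hlt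
    · rw [h.1, h'.1]
    · rw [h.2.2 x y hlt, h'.2.2 x y hlt]
      congr 1
      exact finsum_mem_congr rfl fun z hz => IH z hz.2 x hz.1
  funext x y
  by_cases hxy : x ≤ y
  · exact key y x hxy
  · rw [h.2.1 x y hxy, h'.2.1 x y hxy]

lemma sum_Icc_split (f : α → ℤ) {x y : α} (hxy : x < y) :
    ∑ z ∈ (Set.toFinite (Set.Icc x y)).toFinset, f z
      = ∑ z ∈ (Set.toFinite (Set.Ico x y)).toFinset, f z + f y := by
  have hsplit : (Set.toFinite (Set.Icc x y)).toFinset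
      = insert y (Set.toFinite (Set.Ico x y)).toFinset := by
    ext z
    simp only [Set.Finite.mem_toFinset, Finset.mem_insert, Set.mem_Icc, Set.mem_Ico]
    constructor
    · rintro ⟨h1, h2⟩
      rcases eq_or_lt_of_le h2 with rfl | h2
      exacts [Or.inl rfl, Or.inr ⟨h1, h2⟩]
    · rintro (rfl | ⟨h1, h2⟩)
      exacts [⟨hxy.le, le_rfl⟩, ⟨h1, h2.le⟩]
  rw [hsplit, Finset.sum_insert (by simp), add_comm]

lemma IsMobius.sum_Icc {mu : α → α → ℤ} (h : IsMobius mu) {x y : α} (hxy : x ≤ y) :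
    ∑ z ∈ (Set.toFinite (Set.Icc x y)).toFinset, mu x z = if x = y then 1 else 0 := by
  rcases eq_or_lt_of_le hxy with rfl | hlt
  · rw [if_pos rfl]
    rw [show (Set.toFinite (Set.Icc x x)).toFinset = {x} by
      ext z; simp [Set.Finite.mem_toFinset, le_antisymm_iff, and_comm]]
    simp [h.1]
  · rw [if_neg (ne_of_lt hlt), sum_Icc_split _ hlt, h.2.2 x y hlt,
      finsum_mem_eq_finite_toFinset_sum _ (Set.toFinite (Set.Ico x y))]
    ring

noncomputable def rmobiusFn (x y : α) : ℤ :=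
  mobiusFn (α := αᵒᵈ) (OrderDual.toDual y) (OrderDual.toDual x)

lemma rmobiusFn_sum_Icc {x y : α} (hxy : x ≤ y) :
    ∑ z ∈ (Set.toFinite (Set.Icc x y)).toFinset, rmobiusFn z y = if x = y then 1 else 0 := by
  have h := (mobiusFn_isMobius (α := αᵒᵈ)).sum_Icc
    (x := OrderDual.toDual y) (y := OrderDual.toDual x) hxy
  replace h := h.trans (show _ = (if x = y then (1:ℤ) else 0) by split_ifs <;> simp_all)
  rw [← h]
  refine Finset.sum_nbij' (fun z => OrderDual.toDual z) (fun z => OrderDual.ofDual z)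
    ?_ ?_ (fun _ _ => rfl) (fun _ _ => rfl) (fun a _ => rfl)
  · intro a ha
    simp only [Set.Finite.mem_toFinset, Set.mem_Icc] at ha ⊢
    exact ⟨ha.2, ha.1⟩
  · intro a ha
    simp only [Set.Finite.mem_toFinset, Set.mem_Icc] at ha ⊢
    exact ⟨ha.2, ha.1⟩

lemma IsMobius.eq_rmobius {mu : α → α → ℤ} (h : IsMobius mu) {x y : α} (hxy : x ≤ y) :
    mu x y = rmobiusFn x y := by
  have key : ∀ w ∈ (Set.toFinite (Set.Icc x y)).toFinset,
      ∑ z ∈ (Set.toFinite (Set.Icc x w)).toFinset, mu x z * rmobiusFn w y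
        = (if x = w then 1 else 0) * rmobiusFn w y := by
    intro w hw
    rw [Set.Finite.mem_toFinset, Set.mem_Icc] at hw
    rw [← Finset.sum_mul, h.sum_Icc hw.1]
  have key2 : ∀ z ∈ (Set.toFinite (Set.Icc x y)).toFinset,
      ∑ w ∈ (Set.toFinite (Set.Icc z y)).toFinset, mu x z * rmobiusFn w y
        = mu x z * (if z = y then 1 else 0) := by
    intro z hz
    rw [Set.Finite.mem_toFinset, Set.mem_Icc] at hz
    rw [← Finset.mul_sum, rmobiusFn_sum_Icc hz.2]
  have swap : ∑ w ∈ (Set.toFinite (Set.Icc x y)).toFinset,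
      ∑ z ∈ (Set.toFinite (Set.Icc x w)).toFinset, mu x z * rmobiusFn w y
      = ∑ z ∈ (Set.toFinite (Set.Icc x y)).toFinset,
      ∑ w ∈ (Set.toFinite (Set.Icc z y)).toFinset, mu x z * rmobiusFn w y := by
    refine Finset.sum_comm' ?_
    intro w z
    simp only [Set.Finite.mem_toFinset, Set.mem_Icc]
    constructor
    · rintro ⟨⟨h1, h2⟩, h3, h4⟩
      exact ⟨⟨h4, h2⟩, h3, h4.trans h2⟩
    · rintro ⟨⟨h4, h2⟩, h3, _⟩
      exact ⟨⟨h3.trans h4, h2⟩, h3, h4⟩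
  rw [Finset.sum_congr rfl key, Finset.sum_congr rfl key2] at swap
  have hx : x ∈ (Set.toFinite (Set.Icc x y)).toFinset := by
    simp [Set.Finite.mem_toFinset, hxy]
  have hy : y ∈ (Set.toFinite (Set.Icc x y)).toFinset := by
    simp [Set.Finite.mem_toFinset, hxy]
  rw [Finset.sum_eq_single_of_mem x hx (by intro b _ hb; rw [if_neg (Ne.symm hb), zero_mul]),
    Finset.sum_eq_single_of_mem y hy (by intro b _ hb; rw [if_neg hb, mul_zero])] at swap
  simpa using swap.symm

lemma IsMobius.sum_Icc_right {mu : α → α → ℤ} (h : IsMobius mu) {x y : α} (hxy : x ≤ y) :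
    ∑ z ∈ (Set.toFinite (Set.Icc x y)).toFinset, mu z y = if x = y then 1 else 0 := by
  rw [← rmobiusFn_sum_Icc hxy]
  refine Finset.sum_congr rfl fun z hz => ?_
  rw [Set.Finite.mem_toFinset, Set.mem_Icc] at hz
  exact h.eq_rmobius hz.2
end General

section Transfer
variable {α : Type*} {β : Type*} [PartialOrder α] [PartialOrder β] [Finite α] [Finite β]

/-- Restriction of a Möbius function to a convex subtype. -/
lemma mobius_subtype {p : α → Prop}
    (hconv : ∀ ⦃a b c : α⦄, p a → p c → a ≤ b → b ≤ c → p b)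
    {mu : α → α → ℤ} (h : IsMobius mu)
    {mus : {z // p z} → {z // p z} → ℤ} (hs : IsMobius mus)
    (u v : {z // p z}) : mus u v = mu u.1 v.1 := by
  have hg : IsMobius (fun (u v : {z // p z}) => mu u.1 v.1) := by
    refine ⟨fun x => h.1 x.1, fun x y hxy => h.2.1 _ _ (fun hc => hxy hc), fun x y hxy => ?_⟩
    show mu x.1 y.1 = -∑ᶠ z ∈ Set.Ico x y, mu x.1 z.1
    have hlt : (x : α) < y := Subtype.coe_lt_coe.mpr hxy
    rw [h.2.2 _ _ hlt]
    congr 1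
    have himg : Subtype.val '' Set.Ico x y = Set.Ico (x : α) (y : α) := by
      ext z
      simp only [Set.mem_image, Set.mem_Ico]
      constructor
      · rintro ⟨w, ⟨hw1, hw2⟩, rfl⟩
        exact ⟨Subtype.coe_le_coe.mpr hw1, Subtype.coe_lt_coe.mpr hw2⟩
      · rintro ⟨h1, h2⟩
        exact ⟨⟨z, hconv x.2 y.2 h1 h2.le⟩, ⟨h1, h2⟩, rfl⟩
    rw [← himg, finsum_mem_image (Subtype.val_injective.injOn)]
  rw [hs.unique hg]

/-- Transfer of a Möbius function along an order isomorphism. -/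
lemma mobius_orderIso (e : α ≃o β) {mu : α → α → ℤ} (h : IsMobius mu)
    {mu' : β → β → ℤ} (h' : IsMobius mu') (x y : α) : mu' (e x) (e y) = mu x y := by
  have hg : IsMobius (fun x y : α => mu' (e x) (e y)) := by
    refine ⟨fun x => h'.1 _, fun x y hxy => h'.2.1 _ _ (fun hc => hxy (e.le_iff_le.mp hc)),
      fun x y hxy => ?_⟩
    show mu' (e x) (e y) = -∑ᶠ z ∈ Set.Ico x y, mu' (e x) (e z)
    rw [h'.2.2 _ _ (e.lt_iff_lt.mpr hxy)]
    congr 1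
    have himg : e '' Set.Ico x y = Set.Ico (e x) (e y) := by
      ext z
      simp only [Set.mem_image, Set.mem_Ico]
      constructor
      · rintro ⟨w, ⟨hw1, hw2⟩, rfl⟩
        exact ⟨e.le_iff_le.mpr hw1, e.lt_iff_lt.mpr hw2⟩
      · rintro ⟨h1, h2⟩
        exact ⟨e.symm z, ⟨e.le_iff_le.mp (by simpa using h1), e.lt_iff_lt.mp (by simpa using h2)⟩,
          e.apply_symm_apply z⟩
    rw [← himg, finsum_mem_image (e.injective.injOn)]
  rw [IsMobius.unique h hg]

/-- Möbius function of a product poset. -/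
lemma mobius_prod {mu : α × β → α × β → ℤ} (h : IsMobius mu)
    {mu1 : α → α → ℤ} (h1 : IsMobius mu1) {mu2 : β → β → ℤ} (h2 : IsMobius mu2)
    (p q : α × β) : mu p q = mu1 p.1 q.1 * mu2 p.2 q.2 := by
  have hg : IsMobius (fun p q : α × β => mu1 p.1 q.1 * mu2 p.2 q.2) := by
    refine ⟨fun x => by show mu1 x.1 x.1 * mu2 x.2 x.2 = 1; rw [h1.1, h2.1, one_mul],
      fun x y hxy => ?_, fun x y hxy => ?_⟩
    · show mu1 x.1 y.1 * mu2 x.2 y.2 = 0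
      rcases (not_and_or.mp (fun hc => hxy (Prod.le_def.mpr hc))) with hc | hc
      · rw [h1.2.1 _ _ hc, zero_mul]
      · rw [h2.2.1 _ _ hc, mul_zero]
    · show mu1 x.1 y.1 * mu2 x.2 y.2 = -∑ᶠ z ∈ Set.Ico x y, mu1 x.1 z.1 * mu2 x.2 z.2
      have hle := hxy.le
      have hsum : ∑ z ∈ (Set.toFinite (Set.Icc x y)).toFinset,
          mu1 x.1 z.1 * mu2 x.2 z.2 = 0 := by
        have hIcc : Set.Icc x y = Set.Icc x.1 y.1 ×ˢ Set.Icc x.2 y.2 := Set.Icc_prod_eq x y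
        have hfin : (Set.toFinite (Set.Icc x y)).toFinset
            = (Set.toFinite (Set.Icc x.1 y.1)).toFinset ×ˢ
              (Set.toFinite (Set.Icc x.2 y.2)).toFinset := by
          ext z
          simp only [Set.Finite.mem_toFinset, Finset.mem_product, hIcc, Set.mem_prod]
        rw [hfin, Finset.sum_product]
        have hinner : ∀ z1 ∈ (Set.toFinite (Set.Icc x.1 y.1)).toFinset,
            ∑ z2 ∈ (Set.toFinite (Set.Icc x.2 y.2)).toFinset, mu1 x.1 z1 * mu2 x.2 z2
            = mu1 x.1 z1 * (if x.2 = y.2 then 1 else 0) := fun z1 _ => by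
          rw [← Finset.mul_sum, h2.sum_Icc (Prod.le_def.mp hle).2]
        rw [Finset.sum_congr rfl hinner, ← Finset.sum_mul, h1.sum_Icc (Prod.le_def.mp hle).1]
        by_cases hc1 : x.1 = y.1
        · have hc2 : ¬ x.2 = y.2 := fun hc2 => hxy.ne (Prod.ext hc1 hc2)
          rw [if_neg hc2, if_pos hc1, mul_zero]
        · rw [if_neg hc1, zero_mul]
      rw [sum_Icc_split _ hxy] at hsum
      rw [finsum_mem_eq_finite_toFinset_sum _ (Set.toFinite (Set.Ico x y))]
      linarith [hsum]
  rw [IsMobius.unique h hg]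
end Transfer

section Weisner
variable {α : Type*} [Lattice α] [BoundedOrder α] [Finite α]

lemma weisner {mu : α → α → ℤ} (h : IsMobius mu) {a : α} (ha : a < ⊤) :
    ∑ x ∈ (Set.toFinite {x : α | x ⊓ a = ⊥}).toFinset, mu x ⊤ = 0 := by
  classical
  have hT : (Set.toFinite {x : α | x ⊓ a = ⊥}).toFinset
      = (Set.toFinite (Set.univ : Set α)).toFinset.filter (fun x => x ⊓ a = ⊥) := by
    ext z; simp [Set.Finite.mem_toFinset]
  rw [hT, Finset.sum_filter]
  have hterm : ∀ x ∈ (Set.toFinite (Set.univ : Set α)).toFinset,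
      (if x ⊓ a = ⊥ then mu x ⊤ else 0)
      = ∑ y ∈ (Set.toFinite (Set.Icc (⊥:α) (x ⊓ a))).toFinset, mu ⊥ y * mu x ⊤ := by
    intro x _
    rw [← Finset.sum_mul, h.sum_Icc bot_le]
    by_cases hx : x ⊓ a = ⊥
    · rw [if_pos hx, if_pos hx.symm, one_mul]
    · rw [if_neg hx, if_neg (fun hc => hx hc.symm), zero_mul]
  rw [Finset.sum_congr rfl hterm]
  have hswap : ∑ x ∈ (Set.toFinite (Set.univ : Set α)).toFinset,
      ∑ y ∈ (Set.toFinite (Set.Icc (⊥:α) (x ⊓ a))).toFinset, mu ⊥ y * mu x ⊤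
      = ∑ y ∈ (Set.toFinite (Set.Icc (⊥:α) a)).toFinset,
      ∑ x ∈ (Set.toFinite (Set.Icc y (⊤:α))).toFinset, mu ⊥ y * mu x ⊤ := by
    refine Finset.sum_comm' ?_
    intro x y
    constructor
    · rintro ⟨-, hy⟩
      rw [Set.Finite.mem_toFinset, Set.mem_Icc, le_inf_iff] at hy
      refine ⟨?_, ?_⟩
      · rw [Set.Finite.mem_toFinset, Set.mem_Icc]; exact ⟨hy.2.1, le_top⟩
      · rw [Set.Finite.mem_toFinset, Set.mem_Icc]; exact ⟨hy.1, hy.2.2⟩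
    · rintro ⟨hx, hy⟩
      rw [Set.Finite.mem_toFinset, Set.mem_Icc] at hx hy
      refine ⟨by simp [Set.Finite.mem_toFinset], ?_⟩
      rw [Set.Finite.mem_toFinset, Set.mem_Icc, le_inf_iff]
      exact ⟨hy.1, hx.1, hy.2⟩
  rw [hswap]
  have hzero : ∀ y ∈ (Set.toFinite (Set.Icc (⊥:α) a)).toFinset,
      ∑ x ∈ (Set.toFinite (Set.Icc y (⊤:α))).toFinset, mu ⊥ y * mu x ⊤ = 0 := by
    intro y hy
    rw [Set.Finite.mem_toFinset, Set.mem_Icc] at hy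
    have hne : y ≠ ⊤ := fun hc => absurd (hc ▸ hy.2) (not_le_of_gt ha)
    rw [← Finset.mul_sum, h.sum_Icc_right le_top, if_neg hne, mul_zero]
  rw [Finset.sum_congr rfl hzero, Finset.sum_const, smul_zero]
end Weisner

instance setoidFinite {α : Type*} [Finite α] : Finite (Setoid α) :=
  Finite.of_injective (fun s : Setoid α => ⇑s)
    fun _ _ h => Setoid.ext fun x y => iff_of_eq (congrFun (congrFun h x) y)

/-- generalised modular partition -/
def modpG {Y : Type*} (A : Set Y) : Setoid Y where
  r x y := x = y ∨ (x ∈ A ∧ y ∈ A)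
  iseqv := by
    refine ⟨fun _ => Or.inl rfl, ?_, ?_⟩
    · rintro x y (rfl | ⟨hx, hy⟩)
      · exact Or.inl rfl
      · exact Or.inr ⟨hy, hx⟩
    · rintro x y z (rfl | ⟨hx, hy⟩) h
      · exact h
      · rcases h with rfl | ⟨hy', hz⟩
        · exact Or.inr ⟨hx, hy⟩
        · exact Or.inr ⟨hx, hz⟩

lemma modpG_rel {Y : Type*} (A : Set Y) (x y : Y) :
    (modpG A) x y ↔ x = y ∨ (x ∈ A ∧ y ∈ A) := Iff.rfl

lemma numBlocks_eq {α : Type*} [Finite α] (s : Setoid α) :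
    numBlocks s = Nat.card (Quotient s) := by
  unfold numBlocks
  rw [← Nat.card_coe_set_eq]
  exact (Nat.card_congr (Setoid.quotientEquivClasses s)).symm

/-- `mu Q ⊤` over `Setoid Y` equals `mu' ⊥ ⊤` over partitions of the quotient. -/
lemma mu_Q_top {Y : Type*} [Finite Y] {mu : Setoid Y → Setoid Y → ℤ} (hmu : IsMobius mu)
    (Q : Setoid Y) {mu' : Setoid (Quotient Q) → Setoid (Quotient Q) → ℤ}
    (hmu' : IsMobius mu') : mu Q ⊤ = mu' ⊥ ⊤ := by
  have hconv : ∀ ⦃a b c : Setoid Y⦄, Q ≤ a → Q ≤ c → a ≤ b → b ≤ c → Q ≤ b :=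
    fun a b c ha _ hab _ => ha.trans hab
  set mus := mobiusFn (α := {s // Q ≤ s}) with hmus
  have h1 : mus ⟨Q, le_rfl⟩ ⟨⊤, le_top⟩ = mu Q ⊤ :=
    mobius_subtype hconv hmu (mobiusFn_isMobius) _ _
  set e := Setoid.correspondence Q with he
  have h2 : mu' (e ⟨Q, le_rfl⟩) (e ⟨⊤, le_top⟩) = mus ⟨Q, le_rfl⟩ ⟨⊤, le_top⟩ :=
    mobius_orderIso e (mobiusFn_isMobius) hmu' _ _
  have hbot : e ⟨Q, le_rfl⟩ = ⊥ := by
    refine le_antisymm ?_ bot_le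
    rw [show (⊥ : Setoid (Quotient Q)) = e (e.symm ⊥) from (e.apply_symm_apply _).symm]
    exact e.le_iff_le.mpr (e.symm ⊥).2
  have htop : e ⟨⊤, le_top⟩ = ⊤ := by
    refine le_antisymm le_top ?_
    rw [show (⊤ : Setoid (Quotient Q)) = e (e.symm ⊤) from (e.apply_symm_apply _).symm]
    exact e.le_iff_le.mpr (Subtype.coe_le_coe.mp le_top)
  rw [← h1, ← h2, hbot, htop]

lemma card_quotient_modpG_pair {Y : Type*} [Finite Y] {z y₀ : Y} (hzy : z ≠ y₀) :
    Nat.card (Quotient (modpG ({z, y₀} : Set Y))) = Nat.card Y - 1 := by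
  classical
  have e : {y : Y // y ≠ z} ≃ Quotient (modpG ({z, y₀} : Set Y)) := by
    refine Equiv.ofBijective (fun y => Quotient.mk _ y.1) ⟨?_, ?_⟩
    · intro u v huv
      have := Quotient.exact huv
      rcases this with h | ⟨h1, h2⟩
      · exact Subtype.ext h
      · rcases h1 with h1 | h1
        · exact absurd h1 u.2
        · rcases h2 with h2 | h2
          · exact absurd h2 v.2
          · exact Subtype.ext (h1.trans h2.symm)
    · intro w
      induction w using Quotient.ind with
      | _ w =>
        by_cases hw : w = z
        · exact ⟨⟨y₀, fun hc => hzy hc.symm⟩,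
            Quotient.sound (Or.inr ⟨by simp, by simp [hw]⟩)⟩
        · exact ⟨⟨w, hw⟩, rfl⟩
  rw [← Nat.card_congr e]
  letI := Fintype.ofFinite Y
  rw [Nat.card_eq_fintype_card, Nat.card_eq_fintype_card, Fintype.card_subtype_compl
    (p := fun y => y = z), Fintype.card_subtype_eq]

lemma setoid_bot_rel {Y : Type*} (u v : Y) : (⊥ : Setoid Y) u v ↔ u = v := by
  simp [Setoid.bot_def]

lemma setoid_top_rel {Y : Type*} (u v : Y) : (⊤ : Setoid Y) u v := by
  rw [Setoid.top_def]
  trivial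

lemma setoid_inf_rel {Y : Type*} (r s : Setoid Y) (u v : Y) :
    (r ⊓ s) u v ↔ r u v ∧ s u v := Setoid.inf_iff_and

lemma setoid_mu (m : ℕ) : ∀ (Y : Type) [Finite Y], Nonempty Y → Nat.card Y = m →
    ∀ mu : Setoid Y → Setoid Y → ℤ, IsMobius mu →
    mu ⊥ ⊤ = (-1)^(m-1) * (Nat.factorial (m-1) : ℤ) := by
  induction m using Nat.strong_induction_on with
  | _ m IH =>
    intro Y _ hne hcard mu hmu
    have hm1 : 1 ≤ m := by
      have h0 : Nat.card Y ≠ 0 := Nat.card_ne_zero.mpr ⟨hne, inferInstance⟩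
      omega
    by_cases hm : m = 1
    · subst hm
      haveI : Subsingleton Y := (Nat.card_eq_one_iff_unique.mp hcard).1
      have hbt : (⊥ : Setoid Y) = ⊤ :=
        Setoid.ext fun x y => ⟨fun _ => setoid_top_rel x y,
          fun _ => (setoid_bot_rel x y).mpr (Subsingleton.elim x y)⟩
      rw [← hbt, hmu.1]
      simp
    · have hm2 : 2 ≤ m := by omega
      letI := Fintype.ofFinite Y
      haveI : Nontrivial Y := Fintype.one_lt_card_iff_nontrivial.mp
        (by rw [← Nat.card_eq_fintype_card, hcard]; omega)
      obtain ⟨y₀⟩ := hne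
      set a : Setoid Y := modpG {y | y ≠ y₀} with ha
      obtain ⟨z0, hz0⟩ := exists_ne y₀
      have hatop : a < ⊤ := by
        refine lt_of_le_of_ne le_top fun hc => ?_
        have htr : (⊤ : Setoid Y) z0 y₀ := setoid_top_rel z0 y₀
        rw [← hc] at htr
        rcases htr with h | ⟨_, h⟩
        · exact hz0 h
        · exact h rfl
      have hw := weisner hmu hatop
      have hchar : {x : Setoid Y | x ⊓ a = ⊥}
          = insert ⊥ ((fun z => modpG ({z, y₀} : Set Y)) '' {z | z ≠ y₀}) := by
        ext x
        simp only [Set.mem_setOf_eq, Set.mem_insert_iff, Set.mem_image]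
        constructor
        · intro hx
          have hinf : ∀ u v, x u v → u ≠ v → (u = y₀ ∨ v = y₀) := by
            intro u v huv hne'
            by_contra hcon
            push_neg at hcon
            have hrel : (x ⊓ a) u v := (setoid_inf_rel x a u v).mpr
              ⟨huv, Or.inr ⟨hcon.1, hcon.2⟩⟩
            rw [hx] at hrel
            exact hne' ((setoid_bot_rel u v).mp hrel)
          by_cases hxbot : x = ⊥
          · exact Or.inl hxbot
          · right
            have hex : ∃ u v, x u v ∧ u ≠ v := by
              by_contra hcon
              push_neg at hcon
              apply hxbot
              refine Setoid.ext fun u v => ⟨fun h => (setoid_bot_rel u v).mpr (hcon u v h),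
                fun h => (setoid_bot_rel u v).mp h ▸ x.refl' u⟩
            obtain ⟨u, v, huv, hneuv⟩ := hex
            have hzex : ∃ z, z ≠ y₀ ∧ x z y₀ := by
              rcases hinf u v huv hneuv with rfl | rfl
              · exact ⟨v, fun hc => hneuv hc.symm, x.symm' huv⟩
              · exact ⟨u, fun hc => hneuv hc, huv⟩
            obtain ⟨z, hzne, hzrel⟩ := hzex
            refine ⟨z, hzne, ?_⟩
            refine (Setoid.ext fun u' v' => ?_)
            have hrel2 : ∀ w, w ∈ ({z, y₀} : Set Y) → x w y₀ := by
              intro w hw'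
              simp only [Set.mem_insert_iff, Set.mem_singleton_iff] at hw'
              rcases hw' with rfl | rfl
              · exact hzrel
              · exact x.refl' _
            have hkey : ∀ w, x w y₀ → w ≠ y₀ → w = z := by
              intro w hwrel hwne
              by_cases hwz : w = z
              · exact hwz
              · have hxwz : x w z := x.trans' hwrel (x.symm' hzrel)
                rcases hinf w z hxwz hwz with h | h
                · exact absurd h hwne
                · exact absurd h hzne
            constructor
            · rintro (rfl | ⟨hu', hv'⟩)
              · exact x.refl' _
              · exact x.trans' (hrel2 u' hu') (x.symm' (hrel2 v' hv'))
            · intro hx'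
              by_cases heq : u' = v'
              · exact Or.inl heq
              · right
                rcases hinf u' v' hx' heq with h | h
                · have hv'ne : v' ≠ y₀ := fun hc => heq (h.trans hc.symm)
                  have hv'z : v' = z := hkey v' (x.symm' (h ▸ hx')) hv'ne
                  exact ⟨by simp [h], by simp [hv'z]⟩
                · have hu'ne : u' ≠ y₀ := fun hc => heq (hc.trans h.symm)
                  have hu'z : u' = z := hkey u' (h ▸ hx') hu'ne
                  exact ⟨by simp [hu'z], by simp [h]⟩
        · rintro (rfl | ⟨z, hz, rfl⟩)
          · exact bot_inf_eq a
          · refine le_antisymm ?_ bot_le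
            rw [Setoid.le_def]
            intro u v huv
            rcases (setoid_inf_rel _ a u v).mp huv with ⟨h1, h2⟩
            refine (setoid_bot_rel u v).mpr ?_
            rcases h1 with rfl | ⟨hu, hv⟩
            · rfl
            · rcases h2 with rfl | ⟨hu', hv'⟩
              · rfl
              · simp only [Set.mem_insert_iff, Set.mem_singleton_iff] at hu hv
                simp only [Set.mem_setOf_eq] at hu' hv'
                rcases hu with rfl | rfl
                · rcases hv with rfl | rfl
                  · rfl
                  · exact absurd rfl hv'
                · exact absurd rfl hu'
      have hTfin : (Set.toFinite {x : Setoid Y | x ⊓ a = ⊥}).toFinset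
          = insert (⊥ : Setoid Y)
            ((Set.toFinite {z : Y | z ≠ y₀}).toFinset.image
              (fun z => modpG ({z, y₀} : Set Y))) := by
        ext x
        simp only [Set.Finite.mem_toFinset, hchar, Set.mem_insert_iff, Set.mem_image,
          Finset.mem_insert, Finset.mem_image, Set.mem_setOf_eq]
      rw [hTfin] at hw
      have hnotmem : (⊥ : Setoid Y) ∉ (Set.toFinite {z : Y | z ≠ y₀}).toFinset.image
          (fun z => modpG ({z, y₀} : Set Y)) := by
        intro hc
        obtain ⟨w, hw1, hw2⟩ := Finset.mem_image.mp hc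
        rw [Set.Finite.mem_toFinset, Set.mem_setOf_eq] at hw1
        have : (modpG ({w, y₀} : Set Y)) w y₀ := Or.inr ⟨by simp, by simp⟩
        rw [hw2] at this
        exact hw1 ((setoid_bot_rel w y₀).mp this)
      rw [Finset.sum_insert hnotmem] at hw
      have hinj : ∀ z1 ∈ (Set.toFinite {z : Y | z ≠ y₀}).toFinset,
          ∀ z2 ∈ (Set.toFinite {z : Y | z ≠ y₀}).toFinset,
          modpG ({z1, y₀} : Set Y) = modpG ({z2, y₀} : Set Y) → z1 = z2 := by
        intro z1 h1 z2 h2 heq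
        rw [Set.Finite.mem_toFinset, Set.mem_setOf_eq] at h1 h2
        have : (modpG ({z2, y₀} : Set Y)) z1 y₀ := heq ▸ (Or.inr ⟨by simp, by simp⟩)
        rcases this with h | ⟨hm1', _⟩
        · exact absurd h h1
        · simp only [Set.mem_insert_iff, Set.mem_singleton_iff] at hm1'
          rcases hm1' with rfl | rfl
          · rfl
          · exact absurd rfl h1
      rw [Finset.sum_image hinj] at hw
      have hval : ∀ w ∈ (Set.toFinite {z : Y | z ≠ y₀}).toFinset,
          mu (modpG ({w, y₀} : Set Y)) ⊤ = (-1)^(m-2) * (Nat.factorial (m-2) : ℤ) := by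
        intro w hwm
        rw [Set.Finite.mem_toFinset, Set.mem_setOf_eq] at hwm
        have hcrd : Nat.card (Quotient (modpG ({w, y₀} : Set Y))) = m - 1 := by
          rw [card_quotient_modpG_pair hwm, hcard]
        rw [mu_Q_top hmu (modpG ({w, y₀} : Set Y))
          (mobiusFn_isMobius (α := Setoid (Quotient (modpG ({w, y₀} : Set Y)))))]
        rw [IH (m-1) (by omega) (Quotient (modpG ({w, y₀} : Set Y)))
          ⟨Quotient.mk _ y₀⟩ hcrd _ mobiusFn_isMobius]
        rw [Nat.sub_sub]
      rw [Finset.sum_congr rfl hval, Finset.sum_const, nsmul_eq_mul] at hw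
      have hcardT : (Set.toFinite {z : Y | z ≠ y₀}).toFinset.card = m - 1 := by
        have e2 : ↥{z : Y | z ≠ y₀} ≃ {z : Y // ¬ z = y₀} :=
          Equiv.subtypeEquivRight (fun z => Iff.rfl)
        have hnc : {z : Y | z ≠ y₀}.ncard = m - 1 := by
          rw [← Nat.card_coe_set_eq, Nat.card_congr e2, Nat.card_eq_fintype_card,
            Fintype.card_subtype_compl, Fintype.card_subtype_eq,
            ← Nat.card_eq_fintype_card, hcard]
        rw [← hnc, Set.ncard_eq_toFinset_card _ (Set.toFinite _)]
      rw [hcardT] at hw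
      have hres := eq_neg_of_add_eq_zero_left hw
      rw [hres]
      obtain ⟨k, rfl⟩ : ∃ k, m = k + 2 := ⟨m - 2, by omega⟩
      have e1 : k + 2 - 1 = k + 1 := by omega
      have e2 : k + 2 - 2 = k := by omega
      rw [e1, e2, pow_succ, Nat.factorial_succ]
      push_cast
      ring

-- ===== Stage 4: embedded subsets =====

lemma embedded_sup {n : ℕ} {C : Set (Fin n)} {R : Setoid (Fin n)}
    (h : IsEmbedded n (C, R)) : R ⊔ modp n C = R := congrArg Prod.snd h

lemma embedded_modp_le {n : ℕ} {C : Set (Fin n)} {R : Setoid (Fin n)}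
    (h : IsEmbedded n (C, R)) : modp n C ≤ R := sup_eq_left.mp (embedded_sup h)

lemma embedded_block {n : ℕ} {C : Set (Fin n)} {R : Setoid (Fin n)}
    (h : IsEmbedded n (C, R)) {c : Fin n} (hc : c ∈ C) : C = {y | R y c} := by
  have h2 := embedded_sup h
  have h1 : {y | ∃ a ∈ C, (R ⊔ modp n C) y a} = C := congrArg Prod.fst h
  rw [h2] at h1
  ext y
  simp only [Set.mem_setOf_eq]
  constructor
  · intro hy
    have : modp n C y c := Or.inr ⟨hy, hc⟩
    exact embedded_modp_le h this
  · intro hy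
    rw [← h1]
    exact ⟨c, hc, hy⟩

lemma isEmbedded_mk {n : ℕ} {C : Set (Fin n)} {R : Setoid (Fin n)}
    (hmle : modp n C ≤ R) (hC : {y | ∃ a ∈ C, R y a} = C) : IsEmbedded n (C, R) := by
  unfold IsEmbedded EmbClosure
  have hsup : R ⊔ modp n C = R := sup_eq_left.mpr hmle
  show ({y | ∃ a ∈ C, (R ⊔ modp n C) y a}, R ⊔ modp n C) = (C, R)
  rw [hsup, hC]

lemma isEmbedded_block {n : ℕ} (R : Setoid (Fin n)) (c : Fin n) :
    IsEmbedded n ({y | R y c}, R) := by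
  have hmle : modp n {y | R y c} ≤ R := by
    rw [Setoid.le_def]
    rintro x y (rfl | ⟨hx, hy⟩)
    · exact R.refl' x
    · exact R.trans' hx (R.symm' hy)
  refine isEmbedded_mk hmle ?_
  ext y
  simp only [Set.mem_setOf_eq]
  constructor
  · rintro ⟨a, ha, hya⟩
    exact R.trans' hya ha
  · intro hy
    exact ⟨y, hy, R.refl' y⟩

/-- The interval `[(B,Q),(A,P)]` in `ℰ^N` is isomorphic to the partition interval `[Q,P]`. -/
noncomputable def embIso (n : ℕ) (B A : Set (Fin n)) (Q P : Setoid (Fin n)) (b₀ : Fin n)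
    (hb₀ : b₀ ∈ B) (hQ : IsEmbedded n (B, Q)) (hP : IsEmbedded n (A, P))
    (hle : ((B, Q) : XN n) ≤ (A, P)) :
    {w : Emb n // (⟨(B, Q), hQ⟩ : Emb n) ≤ w ∧ w ≤ ⟨(A, P), hP⟩} ≃o
      {R : Setoid (Fin n) // Q ≤ R ∧ R ≤ P} where
  toFun w := ⟨w.1.1.2, w.2.1.2, w.2.2.2⟩
  invFun R := ⟨⟨({y | R.1 y b₀}, R.1), isEmbedded_block R.1 b₀⟩, by
    constructor
    · refine Subtype.mk_le_mk.mpr ⟨?_, R.2.1⟩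
      intro b hb
      have hQb : Q b b₀ := by
        have hBb : B = {y | Q y b₀} := embedded_block hQ hb₀
        rw [hBb] at hb
        exact hb
      exact R.2.1 hQb
    · refine Subtype.mk_le_mk.mpr ⟨?_, R.2.2⟩
      intro y hy
      have hA : A = {y | P y b₀} := embedded_block hP (hle.1 hb₀)
      rw [hA]
      exact R.2.2 hy⟩
  left_inv w := by
    refine Subtype.ext (Subtype.ext (Prod.ext ?_ rfl))
    exact (embedded_block w.1.2 (w.2.1.1 hb₀)).symm
  right_inv R := Subtype.ext rfl
  map_rel_iff' := by
    intro w w'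
    constructor
    · intro h
      have hRle : w.1.1.2 ≤ w'.1.1.2 := Subtype.mk_le_mk.mp h
      refine Subtype.mk_le_mk.mpr (Subtype.mk_le_mk.mpr ⟨?_, hRle⟩)
      have hb : b₀ ∈ w.1.1.1 := w.2.1.1 hb₀
      have hb' : b₀ ∈ w'.1.1.1 := w'.2.1.1 hb₀
      rw [embedded_block w.1.2 hb, embedded_block w'.1.2 hb']
      intro y hy
      exact hRle hy
    · intro h
      exact Subtype.mk_le_mk.mpr (Subtype.mk_le_mk.mp (Subtype.mk_le_mk.mp h)).2

lemma indPart_mono {n : ℕ} (S : Set (Fin n)) {Q R : Setoid (Fin n)} (h : Q ≤ R) :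
    indPart S Q ≤ indPart S R := by
  rw [Setoid.le_def]
  intro x y hxy
  exact (Setoid.comap_rel _ _ _ _).mpr (h ((Setoid.comap_rel _ _ _ _).mp hxy))

lemma indPart_rel {n : ℕ} (S : Set (Fin n)) (Q : Setoid (Fin n)) (x y : ↥S) :
    (indPart S Q) x y ↔ Q x.1 y.1 := Setoid.comap_rel _ _ _ _

/-- glue two partitions of `A` and `Aᶜ` -/
def glueS {n : ℕ} (A : Set (Fin n)) (S : Setoid ↥A) (T : Setoid ↥Aᶜ) : Setoid (Fin n) where
  r x y := (∃ hx : x ∈ A, ∃ hy : y ∈ A, S ⟨x, hx⟩ ⟨y, hy⟩) ∨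
    (∃ hx : x ∈ Aᶜ, ∃ hy : y ∈ Aᶜ, T ⟨x, hx⟩ ⟨y, hy⟩)
  iseqv := by
    refine ⟨fun x => ?_, ?_, ?_⟩
    · by_cases hx : x ∈ A
      · exact Or.inl ⟨hx, hx, S.refl' _⟩
      · exact Or.inr ⟨hx, hx, T.refl' _⟩
    · rintro x y (⟨hx, hy, h⟩ | ⟨hx, hy, h⟩)
      · exact Or.inl ⟨hy, hx, S.symm' h⟩
      · exact Or.inr ⟨hy, hx, T.symm' h⟩
    · rintro x y z (⟨hx, hy, h⟩ | ⟨hx, hy, h⟩) (⟨hy', hz, h'⟩ | ⟨hy', hz, h'⟩)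
      · exact Or.inl ⟨hx, hz, S.trans' h h'⟩
      · exact absurd hy hy'
      · exact absurd hy' hy
      · exact Or.inr ⟨hx, hz, T.trans' h h'⟩

/-- the interval `[Q,P]` of partitions splits into a product over `A` and `Aᶜ`,
when `A` is a block of `P`. -/
noncomputable def splitIso (n : ℕ) (A : Set (Fin n)) (Q P : Setoid (Fin n)) (a₀ : Fin n)
    (ha₀ : a₀ ∈ A) (hP : IsEmbedded n (A, P)) (hQP : Q ≤ P) :
    {R : Setoid (Fin n) // Q ≤ R ∧ R ≤ P} ≃o
      {ST : Setoid ↥A × Setoid ↥Aᶜ //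
        (indPart A Q, indPart Aᶜ Q) ≤ ST ∧ ST ≤ (⊤, indPart Aᶜ P)} where
  toFun R := ⟨(indPart A R.1, indPart Aᶜ R.1),
    ⟨indPart_mono A R.2.1, indPart_mono Aᶜ R.2.1⟩,
    ⟨le_top, indPart_mono Aᶜ R.2.2⟩⟩
  invFun ST := ⟨glueS A ST.1.1 ST.1.2, by
    have hKA : ∀ x y : Fin n, P x y → (x ∈ A ↔ y ∈ A) := by
      intro x y hxy
      have hA : A = {z | P z a₀} := embedded_block hP ha₀
      rw [hA]
      exact ⟨fun hx => P.trans' (P.symm' hxy) hx, fun hy => P.trans' hxy hy⟩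
    have hK2 : ∀ x y : Fin n, x ∈ A → y ∈ A → P x y := by
      intro x y hx hy
      have hA : A = {z | P z a₀} := embedded_block hP ha₀
      rw [hA] at hx hy
      exact P.trans' hx (P.symm' hy)
    constructor
    · rw [Setoid.le_def]
      intro x y hxy
      by_cases hx : x ∈ A
      · have hy : y ∈ A := (hKA x y (hQP hxy)).mp hx
        exact Or.inl ⟨hx, hy, ST.2.1.1 ((indPart_rel A Q ⟨x, hx⟩ ⟨y, hy⟩).mpr hxy)⟩
      · have hy : y ∉ A := fun hy => hx ((hKA x y (hQP hxy)).mpr hy)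
        exact Or.inr ⟨hx, hy, ST.2.1.2 ((indPart_rel Aᶜ Q ⟨x, hx⟩ ⟨y, hy⟩).mpr hxy)⟩
    · rw [Setoid.le_def]
      rintro x y (⟨hx, hy, h⟩ | ⟨hx, hy, h⟩)
      · exact hK2 x y hx hy
      · exact (indPart_rel Aᶜ P ⟨x, hx⟩ ⟨y, hy⟩).mp (ST.2.2.2 h)⟩
  left_inv R := by
    have hKA : ∀ x y : Fin n, P x y → (x ∈ A ↔ y ∈ A) := by
      intro x y hxy
      have hA : A = {z | P z a₀} := embedded_block hP ha₀
      rw [hA]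
      exact ⟨fun hx => P.trans' (P.symm' hxy) hx, fun hy => P.trans' hxy hy⟩
    refine Subtype.ext (Setoid.ext fun x y => ?_)
    constructor
    · rintro (⟨hx, hy, h⟩ | ⟨hx, hy, h⟩)
      · exact (indPart_rel A R.1 ⟨x, hx⟩ ⟨y, hy⟩).mp h
      · exact (indPart_rel Aᶜ R.1 ⟨x, hx⟩ ⟨y, hy⟩).mp h
    · intro hxy
      by_cases hx : x ∈ A
      · have hy : y ∈ A := (hKA x y (R.2.2 hxy)).mp hx
        exact Or.inl ⟨hx, hy, (indPart_rel A R.1 ⟨x, hx⟩ ⟨y, hy⟩).mpr hxy⟩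
      · have hy : y ∉ A := fun hy => hx ((hKA x y (R.2.2 hxy)).mpr hy)
        exact Or.inr ⟨hx, hy, (indPart_rel Aᶜ R.1 ⟨x, hx⟩ ⟨y, hy⟩).mpr hxy⟩
  right_inv ST := by
    refine Subtype.ext (Prod.ext ?_ ?_)
    · refine Setoid.ext fun u v => ?_
      constructor
      · rintro (⟨hx, hy, h⟩ | ⟨hx, hy, h⟩)
        · exact h
        · exact absurd u.2 hx
      · intro h
        exact Or.inl ⟨u.2, v.2, h⟩
    · refine Setoid.ext fun u v => ?_
      constructor
      · rintro (⟨hx, hy, h⟩ | ⟨hx, hy, h⟩)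
        · exact absurd hx u.2
        · exact h
      · intro h
        exact Or.inr ⟨u.2, v.2, h⟩
  map_rel_iff' := by
    intro R R'
    have hKA : ∀ x y : Fin n, P x y → (x ∈ A ↔ y ∈ A) := by
      intro x y hxy
      have hA : A = {z | P z a₀} := embedded_block hP ha₀
      rw [hA]
      exact ⟨fun hx => P.trans' (P.symm' hxy) hx, fun hy => P.trans' hxy hy⟩
    constructor
    · intro h
      have h1 : indPart A R.1 ≤ indPart A R'.1 := (Subtype.mk_le_mk.mp h).1
      have h2 : indPart Aᶜ R.1 ≤ indPart Aᶜ R'.1 := (Subtype.mk_le_mk.mp h).2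
      refine Subtype.mk_le_mk.mpr ?_
      rw [Setoid.le_def]
      intro x y hxy
      by_cases hx : x ∈ A
      · have hy : y ∈ A := (hKA x y (R.2.2 hxy)).mp hx
        exact (indPart_rel A R'.1 ⟨x, hx⟩ ⟨y, hy⟩).mp
          (h1 ((indPart_rel A R.1 ⟨x, hx⟩ ⟨y, hy⟩).mpr hxy))
      · have hy : y ∉ A := fun hy => hx ((hKA x y (R.2.2 hxy)).mpr hy)
        exact (indPart_rel Aᶜ R'.1 ⟨x, hx⟩ ⟨y, hy⟩).mp
          (h2 ((indPart_rel Aᶜ R.1 ⟨x, hx⟩ ⟨y, hy⟩).mpr hxy))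
    · intro h
      exact Subtype.mk_le_mk.mpr
        ⟨indPart_mono A (Subtype.mk_le_mk.mp h), indPart_mono Aᶜ (Subtype.mk_le_mk.mp h)⟩

lemma indPart_top {n : ℕ} {A : Set (Fin n)} {P : Setoid (Fin n)} (a₀ : Fin n) (ha₀ : a₀ ∈ A)
    (hP : IsEmbedded n (A, P)) : indPart A P = ⊤ := by
  refine Setoid.ext fun u v => ?_
  have hA : A = {z | P z a₀} := embedded_block hP ha₀
  refine ⟨fun _ => by rw [Setoid.top_def]; trivial, fun _ => ?_⟩
  refine (indPart_rel A P u v).mpr ?_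
  have hu : (u : Fin n) ∈ {z | P z a₀} := hA ▸ u.2
  have hv : (v : Fin n) ∈ {z | P z a₀} := hA ▸ v.2
  exact P.trans' hu (P.symm' hv)

theorem mobius_proper_subset (n : ℕ) (hn : 1 ≤ n) (B A : Set (Fin n)) (Q P : Setoid (Fin n))
    (hB : B ≠ ∅) (hBA : B ⊂ A)
    (hQ : IsEmbedded n (B, Q)) (hP : IsEmbedded n (A, P)) (hle : ((B, Q) : XN n) ≤ (A, P)) :
    ∀ (mu1 : Emb n → Emb n → ℤ) (mu2 : Setoid ↥Aᶜ → Setoid ↥Aᶜ → ℤ),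
      IsMobius mu1 → IsMobius mu2 →
      mu1 ⟨(B, Q), hQ⟩ ⟨(A, P), hP⟩ =
        (-1) ^ (numBlocks (indPart A Q) - 1) *
          (Nat.factorial (numBlocks (indPart A Q) - 1) : ℤ) *
          mu2 (indPart Aᶜ Q) (indPart Aᶜ P) := by
  intro mu1 mu2 hmu1 hmu2
  obtain ⟨b₀, hb₀⟩ := Set.nonempty_iff_ne_empty.mpr hB
  have hQP : Q ≤ P := hle.2
  have ha₀ : b₀ ∈ A := hle.1 hb₀
  set EB : Emb n := ⟨(B, Q), hQ⟩ with hEB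
  set EP : Emb n := ⟨(A, P), hP⟩ with hEP
  have hEBP : EB ≤ EP := Subtype.mk_le_mk.mpr hle
  set uE : {z : Emb n // EB ≤ z ∧ z ≤ EP} := ⟨EB, le_rfl, hEBP⟩ with huE
  set vE : {z : Emb n // EB ≤ z ∧ z ≤ EP} := ⟨EP, hEBP, le_rfl⟩ with hvE
  have hconv1 : ∀ ⦃a b c : Emb n⦄, (EB ≤ a ∧ a ≤ EP) → (EB ≤ c ∧ c ≤ EP) →
      a ≤ b → b ≤ c → (EB ≤ b ∧ b ≤ EP) :=
    fun a b c ha hc hab hbc => ⟨ha.1.trans hab, hbc.trans hc.2⟩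
  have A1 : mu1 EB EP = mobiusFn uE vE :=
    (mobius_subtype hconv1 hmu1 mobiusFn_isMobius uE vE).symm
  set e1 := embIso n B A Q P b₀ hb₀ hQ hP hle with he1
  set e2 := splitIso n A Q P b₀ ha₀ hP hQP with he2
  have A2 : mobiusFn uE vE = mobiusFn (e1 uE) (e1 vE) :=
    (mobius_orderIso e1 mobiusFn_isMobius mobiusFn_isMobius uE vE).symm
  have A3 : mobiusFn (e1 uE) (e1 vE) = mobiusFn (e2 (e1 uE)) (e2 (e1 vE)) :=
    (mobius_orderIso e2 mobiusFn_isMobius mobiusFn_isMobius (e1 uE) (e1 vE)).symm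
  have hconvP : ∀ ⦃a b c : Setoid ↥A × Setoid ↥Aᶜ⦄,
      ((indPart A Q, indPart Aᶜ Q) ≤ a ∧ a ≤ (⊤, indPart Aᶜ P)) →
      ((indPart A Q, indPart Aᶜ Q) ≤ c ∧ c ≤ (⊤, indPart Aᶜ P)) →
      a ≤ b → b ≤ c →
      ((indPart A Q, indPart Aᶜ Q) ≤ b ∧ b ≤ (⊤, indPart Aᶜ P)) :=
    fun a b c ha hc hab hbc => ⟨ha.1.trans hab, hbc.trans hc.2⟩
  have A4 : mobiusFn (e2 (e1 uE)) (e2 (e1 vE))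
      = mobiusFn ((e2 (e1 uE)).1 : Setoid ↥A × Setoid ↥Aᶜ) (e2 (e1 vE)).1 :=
    mobius_subtype hconvP mobiusFn_isMobius mobiusFn_isMobius _ _
  have hu3 : (e2 (e1 uE)).1 = (indPart A Q, indPart Aᶜ Q) := rfl
  have hv3 : (e2 (e1 vE)).1 = (⊤, indPart Aᶜ P) :=
    Prod.ext (indPart_top b₀ ha₀ hP) rfl
  have A5 : mobiusFn ((indPart A Q, indPart Aᶜ Q) : Setoid ↥A × Setoid ↥Aᶜ)
      (⊤, indPart Aᶜ P)
      = mobiusFn (indPart A Q) ⊤ * mu2 (indPart Aᶜ Q) (indPart Aᶜ P) :=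
    mobius_prod mobiusFn_isMobius mobiusFn_isMobius hmu2 _ _
  have hcardm : Nat.card (Quotient (indPart A Q)) = numBlocks (indPart A Q) :=
    (numBlocks_eq _).symm
  have A6 : mobiusFn (indPart A Q) ⊤
      = mobiusFn (α := Setoid (Quotient (indPart A Q))) ⊥ ⊤ :=
    mu_Q_top mobiusFn_isMobius _ mobiusFn_isMobius
  have A7 := setoid_mu (numBlocks (indPart A Q)) (Quotient (indPart A Q))
    ⟨Quotient.mk _ ⟨b₀, ha₀⟩⟩ hcardm _ mobiusFn_isMobius
  rw [A1, A2, A3, A4, hu3, hv3, A5, A6, A7]
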